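/- arXiv:1812.00004 — 2 statements merged into one kernel-verified Lean document; each statement's English description precedes it below -/
import Mathlib

section
/- Any two distinct vertices of HCN_n (n ≥ 3) that lie in the same cluster xQ_n have exactly 0 or exactly 2 common neighbors in HCN_n, and any two distinct vertices lying in different clusters have at most 1 common neighbor in HCN_n. -/
/-- Vertices of the hierarchical cubic network: pairs (cluster label, position). -/
abbrev HVert (n : ℕ) := (Fin n → Bool) × (Fin n → Bool)

/-- The hierarchical cubic network HCN_n. Within a cluster (same first coordinate),
two vertices are adjacent iff their second coordinates differ in exactly one bit.
Crossing edges: (x,y) with x ≠ y is adjacent to (y,x); (x,x) is adjacent to (x̄,x̄). -/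
def HCN (n : ℕ) : SimpleGraph (HVert n) :=
  SimpleGraph.fromRel (fun u v =>
    (u.1 = v.1 ∧ (Finset.univ.filter (fun i => u.2 i ≠ v.2 i)).card = 1) ∨
    (u.1 ≠ u.2 ∧ v = (u.2, u.1)) ∨
    (u.1 = u.2 ∧ v = (fun i => !u.1 i, fun i => !u.2 i)))

/-- `u` and `v` are joined by a crossing edge of HCN_n. -/
def IsCrossing (n : ℕ) (u v : HVert n) : Prop :=
  ((u.1 ≠ u.2 ∧ v = (u.2, u.1)) ∨ (u.1 = u.2 ∧ v = (fun i => !u.1 i, fun i => !u.2 i))) ∨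
  ((v.1 ≠ v.2 ∧ u = (v.2, v.1)) ∨ (v.1 = v.2 ∧ u = (fun i => !v.1 i, fun i => !v.2 i)))

/-!
Every vertex `u` of HCN_n has exactly one neighbour outside its cluster, `cross u`, and `cross`
is an involution. So two vertices of one cluster only have common neighbours inside it, and these
are the common neighbours of their positions in the hypercube Q_n: none, or, when the positions
differ in exactly two bits, the two vertices obtained by flipping one of those bits. Two vertices
`u`, `v` of different clusters can only share `cross u` and `cross v`. Sharing both forces either
`v = cross u`, which would then be adjacent to itself, or `{u, v} = {(x, x), (x̄, x)}`, which
makes `x` and `x̄` adjacent in Q_n; that is impossible for n ≥ 2.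
-/

open Finset

def hypercube (ι : Type*) [Fintype ι] : SimpleGraph (ι → Bool) where
  Adj a b := hammingDist a b = 1
  symm := ⟨fun a b h => by rwa [hammingDist_comm]⟩
  loopless := ⟨fun a h => by simp at h⟩

lemma hypercube_not_adj_compl {ι : Type*} [Fintype ι] (hι : Fintype.card ι ≠ 1) (a : ι → Bool) :
    ¬(hypercube ι).Adj a (fun i => !a i) := by
  change #{i | a i ≠ !a i} ≠ 1
  simpa using hι

section flipAt

variable {ι : Type*} [DecidableEq ι]

def flipAt (i : ι) (a : ι → Bool) : ι → Bool := Function.update a i (!a i)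

@[simp]
lemma flipAt_apply_self (i : ι) (a : ι → Bool) : flipAt i a i = !a i := by
  simp [flipAt]

@[simp]
lemma flipAt_apply_of_ne {i k : ι} (a : ι → Bool) (h : k ≠ i) : flipAt i a k = a k := by
  simp [flipAt, h]

@[simp]
lemma flipAt_flipAt_self (i : ι) (a : ι → Bool) : flipAt i (flipAt i a) = a := by
  simp [flipAt]

lemma flipAt_comm (i j : ι) (a : ι → Bool) : flipAt i (flipAt j a) = flipAt j (flipAt i a) := by
  rcases eq_or_ne i j with rfl | hij
  · rfl
  ext k
  rcases eq_or_ne k i with rfl | hki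
  · simp [hij]
  rcases eq_or_ne k j with rfl | hkj
  · simp [hki]
  · simp [hki, hkj]

lemma flipAt_left_injective (a : ι → Bool) : Function.Injective (flipAt · a) := by
  intro i j h
  by_contra hij
  simpa [hij] using congrFun h i

lemma eq_or_eq_of_flipAt_flipAt_eq {a : ι → Bool} {i j k l : ι} (hij : i ≠ j)
    (h : flipAt l (flipAt k a) = flipAt j (flipAt i a)) : k = i ∨ k = j := by
  by_contra! hk
  obtain rfl : l = k := by
    by_contra hlk
    simpa [hk.1, hk.2, Ne.symm hlk] using congrFun h k
  simpa [hij] using congrFun h i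

variable [Fintype ι]

lemma hypercube_adj_iff {a c : ι → Bool} : (hypercube ι).Adj a c ↔ ∃ i, c = flipAt i a := by
  change #{i | a i ≠ c i} = 1 ↔ _
  rw [card_eq_one]
  refine exists_congr fun i => ⟨fun h => ?_, ?_⟩
  · ext j
    have hj := Finset.ext_iff.mp h j
    simp only [mem_filter, mem_univ, true_and, mem_singleton] at hj
    rcases eq_or_ne j i with rfl | hji
    · simpa [Bool.eq_not_iff, eq_comm] using hj
    · simpa [hji, eq_comm] using hj
  · rintro rfl
    ext j
    rcases eq_or_ne j i with rfl | hji <;> simp [*]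

lemma ncard_commonNeighbors_hypercube {a b : ι → Bool} (hab : a ≠ b) :
    ((hypercube ι).commonNeighbors a b).ncard = 0 ∨
      ((hypercube ι).commonNeighbors a b).ncard = 2 := by
  rcases Set.eq_empty_or_nonempty ((hypercube ι).commonNeighbors a b) with h | ⟨c, hc⟩
  · simp [h]
  right
  obtain ⟨⟨i, rfl⟩, ⟨j, hj⟩⟩ : (∃ i, c = flipAt i a) ∧ ∃ j, c = flipAt j b := by
    simpa [SimpleGraph.mem_commonNeighbors, hypercube_adj_iff] using hc
  have hb : b = flipAt j (flipAt i a) := by rw [hj, flipAt_flipAt_self]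
  have hij : i ≠ j := by
    rintro rfl
    exact hab (by simp [hb])
  have hcommon : (hypercube ι).commonNeighbors a b = {flipAt i a, flipAt j a} := by
    ext w
    simp only [SimpleGraph.mem_commonNeighbors, hypercube_adj_iff, Set.mem_insert_iff,
      Set.mem_singleton_iff]
    constructor
    · rintro ⟨⟨k, rfl⟩, ⟨l, hl⟩⟩
      have hkl : flipAt l (flipAt k a) = flipAt j (flipAt i a) := by
        rw [← hb, hl, flipAt_flipAt_self]
      rcases eq_or_eq_of_flipAt_flipAt_eq hij hkl with rfl | rfl <;> simp
    · rintro (rfl | rfl)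
      · exact ⟨⟨i, rfl⟩, ⟨j, by rw [hb, flipAt_flipAt_self]⟩⟩
      · exact ⟨⟨j, rfl⟩, ⟨i, by rw [hb, flipAt_comm j i, flipAt_flipAt_self]⟩⟩
  rw [hcommon, Set.ncard_pair ((flipAt_left_injective a).ne hij)]

end flipAt

namespace HCN

variable {n : ℕ}

def cross (u : HVert n) : HVert n :=
  if u.1 = u.2 then (fun i => !u.1 i, fun i => !u.2 i) else (u.2, u.1)

lemma cross_involutive : Function.Involutive (cross (n := n)) := by
  rintro ⟨x, y⟩
  by_cases h : x = y
  · subst h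
    simp [cross]
  · simp [cross, h, Ne.symm h]

lemma cross_fst_ne (hn : n ≠ 0) (u : HVert n) : (cross u).1 ≠ u.1 := by
  unfold cross
  split_ifs with h
  · intro he
    simpa using congrFun he ⟨0, Nat.pos_of_ne_zero hn⟩
  · exact Ne.symm h

lemma eq_cross_iff (u w : HVert n) :
    ((u.1 ≠ u.2 ∧ w = (u.2, u.1)) ∨ (u.1 = u.2 ∧ w = (fun i => !u.1 i, fun i => !u.2 i))) ↔
      w = cross u := by
  unfold cross
  split_ifs with h <;> simp [h]

lemma adj_iff (hn : n ≠ 0) {u w : HVert n} :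
    (HCN n).Adj u w ↔ (u.1 = w.1 ∧ (hypercube (Fin n)).Adj u.2 w.2) ∨ w = cross u := by
  change u ≠ w ∧ (((u.1 = w.1 ∧ (hypercube (Fin n)).Adj u.2 w.2) ∨ _) ∨
    ((w.1 = u.1 ∧ (hypercube (Fin n)).Adj w.2 u.2) ∨ _)) ↔ _
  rw [eq_cross_iff, eq_cross_iff, eq_comm (a := w.1), SimpleGraph.adj_comm _ w.2,
    eq_comm (a := u), cross_involutive.eq_iff, or_self]
  refine and_iff_right_of_imp ?_
  rintro (⟨-, h⟩ | h) rfl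
  · exact (hypercube (Fin n)).loopless.irrefl _ h
  · exact cross_fst_ne hn u (by rw [← h])

lemma commonNeighbors_eq_image_of_fst_eq (hn : n ≠ 0) {u v : HVert n} (huv : u ≠ v)
    (h : u.1 = v.1) :
    (HCN n).commonNeighbors u v = Prod.mk u.1 '' (hypercube (Fin n)).commonNeighbors u.2 v.2 := by
  ext w
  simp only [SimpleGraph.mem_commonNeighbors, adj_iff hn, Set.mem_image]
  constructor
  · rintro ⟨⟨hu1, hu2⟩ | rfl, ⟨hv1, hv2⟩ | hv⟩
    · exact ⟨w.2, ⟨hu2, hv2⟩, Prod.ext hu1 rfl⟩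
    · exact absurd (hv ▸ hu1.symm.trans h) (cross_fst_ne hn v)
    · exact absurd (hv1.symm.trans h.symm) (cross_fst_ne hn u)
    · exact absurd (cross_involutive.injective hv) huv
  · rintro ⟨x, ⟨hu, hv⟩, rfl⟩
    exact ⟨Or.inl ⟨rfl, hu⟩, Or.inl ⟨h.symm, hv⟩⟩

lemma commonNeighbors_subset_cross_of_fst_ne (hn : n ≠ 0) {u v : HVert n} (h : u.1 ≠ v.1) :
    (HCN n).commonNeighbors u v ⊆ {cross u, cross v} := by
  intro w hw
  rw [SimpleGraph.mem_commonNeighbors, adj_iff hn, adj_iff hn] at hw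
  rcases hw with ⟨⟨hu, -⟩ | hu, ⟨hv, -⟩ | hv⟩
  · exact absurd (hu.trans hv.symm) h
  · simp [hv]
  all_goals simp [hu]

lemma not_adj_cross_and_adj_cross (hn : 2 ≤ n) {u v : HVert n} (huv : u ≠ v) :
    ¬((HCN n).Adj v (cross u) ∧ (HCN n).Adj u (cross v)) := by
  rintro ⟨hvu, huv'⟩
  rw [adj_iff (by omega)] at hvu huv'
  rcases hvu with ⟨hvfst, hvadj⟩ | h
  swap
  · exact huv (cross_involutive.injective h)
  rcases huv' with ⟨hufst, huadj⟩ | h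
  swap
  · exact huv (cross_involutive.injective h.symm)
  have hcard : Fintype.card (Fin n) ≠ 1 := by rw [Fintype.card_fin]; omega
  obtain ⟨x, y⟩ := u
  obtain ⟨x', y'⟩ := v
  by_cases hu : x = y <;> by_cases hv : x' = y' <;>
    simp only [cross, hu, hv, if_true, if_false] at hvfst hvadj hufst huadj
  · exact hvadj.ne hvfst
  · subst hufst
    exact hypercube_not_adj_compl hcard _ hvadj
  · subst hvfst
    exact hypercube_not_adj_compl hcard _ huadj
  · exact hvadj.ne hufst.symm

lemma ncard_commonNeighbors_le_one_of_fst_ne (hn : 2 ≤ n) {u v : HVert n} (h : u.1 ≠ v.1) :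
    ((HCN n).commonNeighbors u v).ncard ≤ 1 := by
  have huv : u ≠ v := fun he => h (congrArg Prod.fst he)
  have hsub := commonNeighbors_subset_cross_of_fst_ne (by omega) h
  refine (Set.ncard_le_one (Set.toFinite _)).mpr fun a ha b hb => ?_
  have hnot := not_adj_cross_and_adj_cross hn huv
  rcases hsub ha with rfl | rfl <;> rcases hsub hb with rfl | rfl
  · rfl
  · exact absurd ⟨ha.2, hb.1⟩ hnot
  · exact absurd ⟨hb.2, ha.1⟩ hnot
  · rfl

end HCN

open HCN in
/-- In HCN_n (n ≥ 3), two distinct vertices in the same cluster have exactly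
0 or 2 common neighbors, and two vertices in different clusters have at most
1 common neighbor. -/
theorem stmt_8 (n : ℕ) (hn : 3 ≤ n) (u v : HVert n) (huv : u ≠ v) :
    (u.1 = v.1 →
      {w | (HCN n).Adj u w ∧ (HCN n).Adj v w}.ncard = 0 ∨
      {w | (HCN n).Adj u w ∧ (HCN n).Adj v w}.ncard = 2) ∧
    (u.1 ≠ v.1 → {w | (HCN n).Adj u w ∧ (HCN n).Adj v w}.ncard ≤ 1) := by
  refine ⟨fun h => ?_, fun h => ncard_commonNeighbors_le_one_of_fst_ne (by omega) h⟩
  have hu2v2 : u.2 ≠ v.2 := fun he => huv (Prod.ext h he)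
  change ((HCN n).commonNeighbors u v).ncard = 0 ∨ ((HCN n).commonNeighbors u v).ncard = 2
  rw [commonNeighbors_eq_image_of_fst_eq (by omega) huv h,
    Set.ncard_image_of_injective _ (Prod.mk_right_injective u.1)]
  exact ncard_commonNeighbors_hypercube hu2v2
end

section
/- Let X be a subcube of a cluster of HCN_n inducing Q_g, with 1 ≤ g ≤ n−1. Then every vertex of HCN_n outside the closed neighborhood N[X] = X ∪ N(X) has at least g neighbors outside N[X]. -/
/-- `X` is a subcube of a cluster of HCN_n inducing a copy of Q_g: all vertices
of `X` share the first coordinate `x`, and their second coordinates form a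
g-dimensional subcube (they agree on a set `S` of `n - g` fixed coordinates). -/
def IsClusterSubcube (n g : ℕ) (X : Set (HVert n)) : Prop :=
  ∃ (x : Fin n → Bool) (S : Finset (Fin n)) (f : Fin n → Bool),
    S.card = n - g ∧ X = {v | v.1 = x ∧ ∀ i ∈ S, v.2 i = f i}

/-- The (open) neighborhood of a vertex set in HCN_n. -/
def setNbhd (n : ℕ) (X : Set (HVert n)) : Set (HVert n) :=
  {w | w ∉ X ∧ ∃ v ∈ X, (HCN n).Adj v w}

namespace HCN

variable {n : ℕ}

def flipAt (c : Fin n → Bool) (i : Fin n) : Fin n → Bool := Function.update c i (!c i)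

lemma flipAt_apply_self (c : Fin n → Bool) (i : Fin n) : flipAt c i i = !c i := by
  simp [flipAt]

lemma flipAt_apply_of_ne (c : Fin n → Bool) {i j : Fin n} (h : j ≠ i) : flipAt c i j = c j := by
  simp [flipAt, h]

lemma flipAt_ne_self (c : Fin n → Bool) (i : Fin n) : flipAt c i ≠ c := fun h => by
  simpa [flipAt_apply_self] using congrFun h i

lemma flipAt_injective (c : Fin n → Bool) : Function.Injective (flipAt c) := by
  intro i j h
  by_contra hij
  simpa [flipAt_apply_self, flipAt_apply_of_ne c hij] using congrFun h i

lemma flipAt_flipAt (c : Fin n → Bool) (i : Fin n) : flipAt (flipAt c i) i = c := by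
  simp [flipAt]

lemma hammingDist_flipAt (c : Fin n → Bool) (i : Fin n) : hammingDist c (flipAt c i) = 1 := by
  rw [hammingDist, Finset.card_eq_one]
  refine ⟨i, Finset.ext fun j => ?_⟩
  rcases eq_or_ne j i with rfl | hj
  · simp [flipAt_apply_self]
  · simp [flipAt_apply_of_ne c hj, hj]

lemma adj_iff_s10 {u v : HVert n} : (HCN n).Adj u v ↔ u ≠ v ∧
    ((u.1 = v.1 ∧ hammingDist u.2 v.2 = 1) ∨ v = u.swap ∨ (u.1 = u.2 ∧ v = (u.1ᶜ, u.1ᶜ))) := by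
  obtain ⟨a, c⟩ := u
  obtain ⟨b, d⟩ := v
  have hcompl : ∀ y : Fin n → Bool, (fun i => !y i) = yᶜ := fun _ => rfl
  have hdist : ∀ y z : Fin n → Bool, (Finset.univ.filter fun i => ¬y i = z i).card =
      hammingDist y z := fun _ _ => rfl
  simp only [HCN, SimpleGraph.fromRel_adj, ne_eq, Prod.mk.injEq, Prod.swap_prod_mk, hcompl,
    hdist, hammingDist_comm d c]
  grind [compl_compl]

lemma adj_flipAt (a c : Fin n → Bool) (i : Fin n) : (HCN n).Adj (a, c) (a, flipAt c i) :=
  adj_iff_s10.2 ⟨by simpa using (flipAt_ne_self c i).symm, Or.inl ⟨rfl, hammingDist_flipAt c i⟩⟩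

def crossNbr (v : HVert n) : HVert n := if v.1 = v.2 then (v.1ᶜ, v.1ᶜ) else v.swap

lemma adj_crossNbr [NeZero n] (v : HVert n) : (HCN n).Adj v (crossNbr v) := by
  unfold crossNbr
  split_ifs with h
  · exact adj_iff_s10.2 ⟨fun he => compl_ne_self (congrArg Prod.fst he).symm,
      Or.inr (Or.inr ⟨h, rfl⟩)⟩
  · exact adj_iff_s10.2 ⟨fun he => h (congrArg Prod.fst he), Or.inr (Or.inl rfl)⟩

lemma crossNbr_fst_ne [NeZero n] (v : HVert n) : (crossNbr v).1 ≠ v.1 := by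
  unfold crossNbr
  split_ifs with h
  · exact compl_ne_self
  · exact Ne.symm h

def subcube (x : Fin n → Bool) (S : Finset (Fin n)) (f : Fin n → Bool) : Set (HVert n) :=
  {v | v.1 = x ∧ ∀ i ∈ S, v.2 i = f i}

lemma mk_mem_closedNbhd_subcube {x d f : Fin n → Bool} {S : Finset (Fin n)}
    (h : (S.filter fun i => d i ≠ f i).card ≤ 1) :
    (x, d) ∈ subcube x S f ∪ setNbhd n (subcube x S f) := by
  rcases Nat.le_one_iff_eq_zero_or_eq_one.1 h with h0 | h1
  · refine Or.inl ⟨rfl, fun i hi => ?_⟩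
    simpa using Finset.filter_eq_empty_iff.1 (Finset.card_eq_zero.1 h0) hi
  · obtain ⟨i, hi⟩ := Finset.card_eq_one.1 h1
    have hmem : ∀ j ∈ S, d j ≠ f j ↔ j = i := fun j hj => by
      simpa [hj] using Finset.ext_iff.1 hi j
    have hiS : i ∈ S := Finset.mem_of_mem_filter i (hi ▸ Finset.mem_singleton_self i)
    refine Or.inr ⟨fun hX => (hmem i hiS).2 rfl (hX.2 i hiS), (x, flipAt d i), ⟨rfl, ?_⟩, ?_⟩
    · intro j hj
      rcases eq_or_ne j i with rfl | hji
      · simpa [flipAt_apply_self] using (Bool.eq_not_of_ne ((hmem j hj).2 rfl))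
      · change flipAt d i j = f j
        rw [flipAt_apply_of_ne d hji]
        exact not_not.1 fun hne => hji ((hmem j hj).1 hne)
    · simpa [flipAt_flipAt] using adj_flipAt x (flipAt d i) i

lemma mem_closedNbhd_subcube {x f : Fin n → Bool} {S : Finset (Fin n)} {v : HVert n}
    (h : v ∈ subcube x S f ∪ setNbhd n (subcube x S f)) :
    (v.1 = x ∧ (S.filter fun i => v.2 i ≠ f i).card ≤ 1) ∨ (v.2 = x ∧ ∀ i ∈ S, v.1 i = f i) ∨
      v = (xᶜ, xᶜ) := by
  rcases h with ⟨hx, hf⟩ | ⟨-, u, ⟨hux, huf⟩, huv⟩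
  · refine Or.inl ⟨hx, ?_⟩
    rw [Finset.filter_false_of_mem fun i hi => not_not.2 (hf i hi), Finset.card_empty]
    exact zero_le_one
  · rcases (adj_iff_s10.1 huv).2 with ⟨h1, hd⟩ | rfl | ⟨-, rfl⟩
    · refine Or.inl ⟨h1 ▸ hux, (Finset.card_le_card fun i hi => ?_).trans hd.le⟩
      simp only [Finset.mem_filter, Finset.mem_univ, true_and] at hi ⊢
      exact fun he => hi.2 (he ▸ huf i hi.1)
    · exact Or.inr (Or.inl ⟨hux, huf⟩)
    · exact Or.inr (Or.inr (by rw [hux]))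

lemma card_le_ncard_of_fst_eq {x c f : Fin n → Bool} {S : Finset (Fin n)}
    (hc : 1 < (S.filter fun i => c i ≠ f i).card) :
    Sᶜ.card ≤
      ((HCN n).neighborSet (x, c) \ (subcube x S f ∪ setNbhd n (subcube x S f))).ncard := by
  rw [← Set.ncard_coe_finset]
  refine Set.ncard_le_ncard_of_injOn (fun i => (x, flipAt c i))
    (fun i hi => ⟨adj_flipAt x c i, fun hN => ?_⟩)
    (fun i _ j _ h => flipAt_injective c (congrArg Prod.snd h))
  have hiS : i ∉ S := Finset.mem_compl.1 (Finset.mem_coe.1 hi)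
  have hflip : ∀ j ∈ S, flipAt c i j = c j := fun j hj =>
    flipAt_apply_of_ne c (ne_of_mem_of_not_mem hj hiS)
  rcases mem_closedNbhd_subcube hN with ⟨-, hle⟩ | ⟨hx, hxf⟩ | hcompl
  · change (S.filter fun j => flipAt c i j ≠ f j).card ≤ 1 at hle
    rw [Finset.filter_congr fun j hj => by rw [hflip j hj]] at hle
    omega
  · have hcf : S.filter (fun j => c j ≠ f j) = ∅ :=
      Finset.filter_false_of_mem fun j hj => not_not.2 <| by
        rw [← hflip j hj, ← hxf j hj]
        exact congrFun hx j
    simp [hcf] at hc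
  · have : Nonempty (Fin n) := ⟨i⟩
    exact compl_ne_self (congrArg Prod.fst hcompl).symm

lemma card_filter_flipAt_mem_le (c : Fin n → Bool) (t : Finset (Fin n → Bool)) :
    (Finset.univ.filter fun i => flipAt c i ∈ t).card ≤ (t.erase c).card :=
  Finset.card_le_card_of_injOn (flipAt c)
    (fun i hi => Finset.mem_erase.2 ⟨flipAt_ne_self c i, (Finset.mem_filter.1 hi).2⟩)
    (flipAt_injective c).injOn

lemma crossNbr_notMem_closedNbhd_subcube {a c x f : Fin n → Bool} {S : Finset (Fin n)}
    (ha : a ≠ x) (hcx : c ≠ x) (hcx' : c ≠ xᶜ) :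
    crossNbr (a, c) ∉ subcube x S f ∪ setNbhd n (subcube x S f) := by
  intro hN
  unfold crossNbr at hN
  split_ifs at hN with hac
  · obtain rfl : a = c := hac
    rcases mem_closedNbhd_subcube hN with ⟨h, -⟩ | ⟨h, -⟩ | h
    · exact hcx' (by rw [← h, compl_compl])
    · exact hcx' (by rw [← h, compl_compl])
    · exact ha (compl_injective (congrArg Prod.fst h))
  · rcases mem_closedNbhd_subcube hN with ⟨h, -⟩ | ⟨h, -⟩ | h
    · exact hcx h
    · exact ha h
    · exact hcx' (congrArg Prod.fst h)

lemma sub_one_le_ncard_of_fst_ne {a c x f : Fin n → Bool} {S : Finset (Fin n)}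
    (ha : a ≠ x) :
    n - 1 ≤
      ((HCN n).neighborSet (a, c) \ (subcube x S f ∪ setNbhd n (subcube x S f))).ncard := by
  rcases eq_zero_or_neZero n with rfl | _
  · exact Nat.zero_le _
  set N := (HCN n).neighborSet (a, c) \ (subcube x S f ∪ setNbhd n (subcube x S f))
  set t : Finset (Fin n → Bool) := {x, xᶜ}
  set good := Finset.univ.filter fun i => flipAt c i ∉ t
  have hgood : (fun i => (a, flipAt c i)) '' good ⊆ N := by
    refine Set.image_subset_iff.2 fun i hi => ?_
    change (a, flipAt c i) ∈ N
    have hit : flipAt c i ∉ t := (Finset.mem_filter.1 hi).2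
    refine ⟨adj_flipAt a c i, fun hN => ?_⟩
    rcases mem_closedNbhd_subcube hN with ⟨h, -⟩ | ⟨h, -⟩ | h
    · exact ha h
    · exact hit (Finset.mem_insert.2 (Or.inl h))
    · exact hit (Finset.mem_insert_of_mem (Finset.mem_singleton.2 (congrArg Prod.snd h)))
  have hgood_card : ((fun i => (a, flipAt c i)) '' good).ncard = good.card := by
    rw [Set.ncard_image_of_injective _ fun i j h => flipAt_injective c (congrArg Prod.snd h),
      Set.ncard_coe_finset]
  have hsplit : (Finset.univ.filter fun i => flipAt c i ∈ t).card + good.card = n := by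
    rw [Finset.card_filter_add_card_filter_not, Finset.card_univ, Fintype.card_fin]
  have hbad := card_filter_flipAt_mem_le c t
  have ht : t.card ≤ 2 := Finset.card_le_two
  by_cases hc : c ∈ t
  · have : (t.erase c).card ≤ 1 := by
      rw [Finset.card_erase_of_mem hc]
      omega
    calc n - 1 ≤ good.card := by omega
      _ = _ := hgood_card.symm
      _ ≤ N.ncard := Set.ncard_le_ncard hgood
  · have hcross : crossNbr (a, c) ∉ (fun i => (a, flipAt c i)) '' good := by
      rintro ⟨i, -, hi⟩
      exact crossNbr_fst_ne (a, c) (congrArg Prod.fst hi).symm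
    rw [Finset.erase_eq_of_notMem hc] at hbad
    calc n - 1 ≤ good.card + 1 := by omega
      _ = (insert (crossNbr (a, c)) ((fun i => (a, flipAt c i)) '' good)).ncard := by
        rw [Set.ncard_insert_of_notMem hcross, hgood_card]
      _ ≤ N.ncard := Set.ncard_le_ncard (Set.insert_subset
        ⟨adj_crossNbr (a, c), crossNbr_notMem_closedNbhd_subcube ha
          (fun h => hc (by simp [t, h])) (fun h => hc (by simp [t, h]))⟩ hgood)

end HCN

open HCN in
theorem stmt_10_general (n g : ℕ) (hg2 : g ≤ n - 1)
    (X : Set (HVert n)) (hX : IsClusterSubcube n g X)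
    (w : HVert n) (hw : w ∉ X ∪ setNbhd n X) :
    g ≤ (((HCN n).neighborSet w) \ (X ∪ setNbhd n X)).ncard := by
  obtain ⟨x, S, f, hS, rfl⟩ := hX
  obtain ⟨a, c⟩ := w
  rcases eq_or_ne a x with rfl | hax
  · have hc : 1 < (S.filter fun i => c i ≠ f i).card :=
      lt_of_not_ge fun h => hw (mk_mem_closedNbhd_subcube h)
    calc g = Sᶜ.card := by rw [Finset.card_compl, Fintype.card_fin, hS]; omega
      _ ≤ _ := card_le_ncard_of_fst_eq hc
  · exact hg2.trans (sub_one_le_ncard_of_fst_ne hax)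

/-- If X is a subcube of a cluster of HCN_n inducing Q_g, 1 ≤ g ≤ n-1, then
every vertex outside the closed neighborhood N[X] has at least g neighbors
outside N[X]. -/
theorem stmt_10 (n g : ℕ) (hg1 : 1 ≤ g) (hg2 : g ≤ n - 1)
    (X : Set (HVert n)) (hX : IsClusterSubcube n g X)
    (w : HVert n) (hw : w ∉ X ∪ setNbhd n X) :
    g ≤ (((HCN n).neighborSet w) \ (X ∪ setNbhd n X)).ncard :=
  stmt_10_general n g hg2 X hX w hw
end
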